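/- Let S be a measurable space, δ a real discount factor with 0 < δ < 1, κ a Markov kernel from S to S, and u : S → ℝ a bounded measurable function. If f : S → ℝ is any bounded measurable function satisfying f(s) = (1 − δ)·u(s) + δ·∫ f(s′) ∂(κ s) for all s ∈ S, then f equals the state value function g defined as the expected discounted sum g(s) = ∫ (∑_{t=0}^∞ δ^t·(1 − δ)·u(ω(t))) ∂P_s along trajectories of the Markov chain started at s. In other words, the state value function is uniquely determined by the Bellman recursion. -/

import Mathlib

open MeasureTheory ProbabilityTheory

/-- Prepending an initial state to a trajectory. -/
def prepend {S : Type*} (s : S) (ω : ℕ → S) : ℕ → S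
  | 0 => s
  | n + 1 => ω n

/-! The discounted return `R` of a trajectory satisfies
`R (prepend s ω) = (1 - δ) * u s + δ * R ω`; integrating this against the one-step
disintegration of `P s` shows that the value function is itself a bounded measurable solution of
the Bellman equation. The difference `h` of two bounded solutions satisfies `h = δ * ∫ h ∂κ`,
so a bound `|h| ≤ C` improves to `|h| ≤ δ ^ n * C` for every `n`, and `h = 0`. -/

open Filter

lemma measurable_prepend {S : Type*} [MeasurableSpace S] (s : S) :
    Measurable (prepend s) := by
  refine measurable_pi_lambda _ fun n => ?_
  cases n with
  | zero => exact measurable_const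
  | succ n => exact measurable_pi_apply n

lemma Measurable.integrable_of_abs_le {α : Type*} [MeasurableSpace α] {μ : Measure α}
    [IsFiniteMeasure μ] {f : α → ℝ} (hf : Measurable f) {C : ℝ} (hC : ∀ a, |f a| ≤ C) :
    Integrable f μ :=
  .of_bound hf.aestronglyMeasurable C (ae_of_all _ hC)

lemma abs_integral_le_of_abs_le {α : Type*} [MeasurableSpace α] {μ : Measure α}
    [IsProbabilityMeasure μ] {f : α → ℝ} {C : ℝ} (hC : ∀ a, |f a| ≤ C) :
    |∫ a, f a ∂μ| ≤ C := by
  simpa using norm_integral_le_of_norm_le_const (μ := μ) (f := f) (ae_of_all _ hC)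

lemma integral_const_add_mul {α : Type*} [MeasurableSpace α] {μ : Measure α}
    [IsProbabilityMeasure μ] {g : α → ℝ} (hg : Integrable g μ) (a b : ℝ) :
    ∫ x, (a + b * g x) ∂μ = a + b * ∫ x, g x ∂μ := by
  rw [integral_add (integrable_const a) (hg.const_mul b), integral_const, integral_const_mul]
  simp

theorem MeasureTheory.Measure.integral_bind {α β E : Type*} [MeasurableSpace α]
    [MeasurableSpace β] [NormedAddCommGroup E] [NormedSpace ℝ E] {μ : Measure α} [SFinite μ]
    {κ : Kernel α β} [IsSFiniteKernel κ] {f : β → E} (hf : Integrable f (μ.bind κ)) :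
    ∫ b, f b ∂(μ.bind κ) = ∫ a, ∫ b, f b ∂κ a ∂μ := by
  rw [Measure.comp_eq_comp_const_apply] at hf ⊢
  rw [Kernel.integral_comp hf]
  simp

section Discounting

variable {S : Type*} {δ : ℝ}

lemma hasSum_discounted_const (hδ0 : 0 ≤ δ) (hδ1 : δ < 1) (C : ℝ) :
    HasSum (fun t : ℕ => δ ^ t * (1 - δ) * C) C := by
  have h := (hasSum_geometric_of_lt_one hδ0 hδ1).mul_right ((1 - δ) * C)
  rw [inv_mul_cancel_left₀ (sub_ne_zero.mpr hδ1.ne')] at h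
  simpa only [mul_assoc] using h

noncomputable def discountedReturn (δ : ℝ) (u : S → ℝ) (ω : ℕ → S) : ℝ :=
  ∑' t, δ ^ t * (1 - δ) * u (ω t)

variable {u : S → ℝ} {C : ℝ}

lemma norm_discounted_term_le (hδ0 : 0 ≤ δ) (hδ1 : δ < 1) (hu : ∀ s, |u s| ≤ C) (ω : ℕ → S)
    (t : ℕ) : ‖δ ^ t * (1 - δ) * u (ω t)‖ ≤ δ ^ t * (1 - δ) * C := by
  have hweight : 0 ≤ δ ^ t * (1 - δ) := mul_nonneg (pow_nonneg hδ0 t) (sub_nonneg.mpr hδ1.le)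
  rw [Real.norm_eq_abs, abs_mul, abs_of_nonneg hweight]
  exact mul_le_mul_of_nonneg_left (hu _) hweight

lemma summable_discounted_terms (hδ0 : 0 ≤ δ) (hδ1 : δ < 1) (hu : ∀ s, |u s| ≤ C)
    (ω : ℕ → S) : Summable fun t => δ ^ t * (1 - δ) * u (ω t) :=
  .of_norm_bounded (hasSum_discounted_const hδ0 hδ1 C).summable
    (norm_discounted_term_le hδ0 hδ1 hu ω)

lemma abs_discountedReturn_le (hδ0 : 0 ≤ δ) (hδ1 : δ < 1) (hu : ∀ s, |u s| ≤ C)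
    (ω : ℕ → S) : |discountedReturn δ u ω| ≤ C :=
  tsum_of_norm_bounded (hasSum_discounted_const hδ0 hδ1 C)
    (norm_discounted_term_le hδ0 hδ1 hu ω)

lemma measurable_discountedReturn [MeasurableSpace S] (hδ0 : 0 ≤ δ) (hδ1 : δ < 1)
    (hu_meas : Measurable u) (hu : ∀ s, |u s| ≤ C) :
    Measurable (discountedReturn δ u) := by
  refine measurable_of_tendsto_metrizable
    (f := fun n ω => ∑ t ∈ Finset.range n, δ ^ t * (1 - δ) * u (ω t)) (fun n => ?_) ?_
  · exact Finset.measurable_sum _ fun t _ => (hu_meas.comp (measurable_pi_apply t)).const_mul _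
  · exact tendsto_pi_nhds.mpr fun ω =>
      (summable_discounted_terms hδ0 hδ1 hu ω).hasSum.tendsto_sum_nat

lemma discountedReturn_prepend (hδ0 : 0 ≤ δ) (hδ1 : δ < 1) (hu : ∀ s, |u s| ≤ C) (s : S)
    (ω : ℕ → S) :
    discountedReturn δ u (prepend s ω) = (1 - δ) * u s + δ * discountedReturn δ u ω := by
  rw [discountedReturn, (summable_discounted_terms hδ0 hδ1 hu _).tsum_eq_zero_add,
    discountedReturn, ← tsum_mul_left]
  simp only [prepend, pow_zero, one_mul, pow_succ]
  congr 1
  exact tsum_congr fun t => by ring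

end Discounting

section Kernel

variable {S : Type*} [MeasurableSpace S] {κ : Kernel S S} [IsMarkovKernel κ]

lemma integral_eq_integral_integral_prepend {K : Kernel S (ℕ → S)} [IsMarkovKernel K]
    (hK : ∀ s, K s = (κ s).bind (K.map (prepend s))) {F : (ℕ → S) → ℝ} (hF : Measurable F)
    {C : ℝ} (hFC : ∀ ω, |F ω| ≤ C) (s : S) :
    ∫ ω, F ω ∂K s = ∫ s', ∫ ω, F (prepend s ω) ∂K s' ∂κ s := by
  rw [hK s, Measure.integral_bind (hF.integrable_of_abs_le hFC)]
  refine integral_congr_ae (ae_of_all _ fun s' => ?_)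
  dsimp only
  rw [Kernel.map_apply _ (measurable_prepend s),
    integral_map (measurable_prepend s).aemeasurable hF.aestronglyMeasurable]

lemma eq_zero_of_eq_mul_integral {δ : ℝ} (hδ0 : 0 ≤ δ) (hδ1 : δ < 1) {h : S → ℝ} {C : ℝ}
    (hC : ∀ s, |h s| ≤ C) (hh : ∀ s, h s = δ * ∫ s', h s' ∂κ s) : h = 0 := by
  have hpow : ∀ n : ℕ, ∀ s, |h s| ≤ δ ^ n * C := by
    intro n
    induction n with
    | zero => simpa using hC
    | succ n ih =>
      intro s
      rw [hh s, abs_mul, abs_of_nonneg hδ0, pow_succ', mul_assoc]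
      exact mul_le_mul_of_nonneg_left (abs_integral_le_of_abs_le ih) hδ0
  have hlim : Tendsto (fun n : ℕ => δ ^ n * C) atTop (nhds 0) := by
    simpa using (tendsto_pow_atTop_nhds_zero_of_lt_one hδ0 hδ1).mul_const C
  funext s
  exact abs_nonpos_iff.mp (ge_of_tendsto' hlim fun n => hpow n s)

lemma bellman_solution_unique {δ : ℝ} (hδ0 : 0 ≤ δ) (hδ1 : δ < 1) {u f g : S → ℝ}
    (hf_meas : Measurable f) {Cf : ℝ} (hf_bd : ∀ s, |f s| ≤ Cf)
    (hf : ∀ s, f s = (1 - δ) * u s + δ * ∫ s', f s' ∂κ s)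
    (hg_meas : Measurable g) {Cg : ℝ} (hg_bd : ∀ s, |g s| ≤ Cg)
    (hg : ∀ s, g s = (1 - δ) * u s + δ * ∫ s', g s' ∂κ s) : f = g := by
  refine sub_eq_zero.mp
    (eq_zero_of_eq_mul_integral (κ := κ) hδ0 hδ1 (C := Cf + Cg) ?_ fun s => ?_)
  · exact fun s => (abs_sub _ _).trans (add_le_add (hf_bd s) (hg_bd s))
  · simp only [Pi.sub_apply]
    rw [integral_sub (hf_meas.integrable_of_abs_le hf_bd) (hg_meas.integrable_of_abs_le hg_bd),
      hf s, hg s]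
    ring

end Kernel

section ValueFunction

variable {S : Type*} [MeasurableSpace S] {δ : ℝ} {u : S → ℝ} {C : ℝ}

noncomputable def valueFunction (δ : ℝ) (u : S → ℝ) (K : Kernel S (ℕ → S)) (s : S) : ℝ :=
  ∫ ω, discountedReturn δ u ω ∂K s

variable {K : Kernel S (ℕ → S)}

lemma measurable_valueFunction (hδ0 : 0 ≤ δ) (hδ1 : δ < 1) (hu_meas : Measurable u)
    (hu : ∀ s, |u s| ≤ C) : Measurable (valueFunction δ u K) :=
  ((measurable_discountedReturn hδ0 hδ1 hu_meas hu).stronglyMeasurable.integral_kernel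
    (κ := K)).measurable

variable [IsMarkovKernel K]

lemma abs_valueFunction_le (hδ0 : 0 ≤ δ) (hδ1 : δ < 1) (hu : ∀ s, |u s| ≤ C) (s : S) :
    |valueFunction δ u K s| ≤ C :=
  abs_integral_le_of_abs_le (abs_discountedReturn_le hδ0 hδ1 hu)

lemma valueFunction_bellman {κ : Kernel S S} [IsMarkovKernel κ]
    (hK : ∀ s, K s = (κ s).bind (K.map (prepend s))) (hδ0 : 0 ≤ δ) (hδ1 : δ < 1)
    (hu_meas : Measurable u) (hu : ∀ s, |u s| ≤ C) (s : S) :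
    valueFunction δ u K s = (1 - δ) * u s + δ * ∫ s', valueFunction δ u K s' ∂κ s := by
  have hD := measurable_discountedReturn hδ0 hδ1 hu_meas hu
  have hDC := abs_discountedReturn_le hδ0 hδ1 hu
  rw [valueFunction, integral_eq_integral_integral_prepend hK hD hDC s]
  simp_rw [discountedReturn_prepend hδ0 hδ1 hu,
    integral_const_add_mul (hD.integrable_of_abs_le hDC)]
  exact integral_const_add_mul
    ((measurable_valueFunction hδ0 hδ1 hu_meas hu).integrable_of_abs_le
      (abs_valueFunction_le hδ0 hδ1 hu)) _ _

end ValueFunction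

/-- Any bounded measurable solution `f` of the Bellman recursion
`f s = (1 - δ) * u s + δ * ∫ f ∂(κ s)` equals the state value function
`g s = ∫ (∑' t, δ ^ t * (1 - δ) * u (ω t)) ∂(P s)`, where `P s` is the Ionescu–Tulcea
trajectory measure of the Markov chain with kernel `κ` started at `s` (characterized as a
Markov kernel satisfying the one-step disintegration
`P s = (κ s).bind (fun s₁ => (P s₁).map (prepend s))`). -/
theorem bellman_solution_eq_state_value_function
    {S : Type*} [MeasurableSpace S] (δ : ℝ) (hδ0 : 0 < δ) (hδ1 : δ < 1)
    (κ : Kernel S S) [IsMarkovKernel κ]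
    (u : S → ℝ) (hu_meas : Measurable u) (hu_bd : ∃ C, ∀ s, |u s| ≤ C)
    (P : S → Measure (ℕ → S)) (hP_meas : Measurable P)
    (hP_prob : ∀ s, IsProbabilityMeasure (P s))
    (hP_rec : ∀ s, P s = (κ s).bind fun s₁ => (P s₁).map (prepend s))
    (f : S → ℝ) (hf_meas : Measurable f) (hf_bd : ∃ C, ∀ s, |f s| ≤ C)
    (hf_bellman : ∀ s, f s = (1 - δ) * u s + δ * ∫ s', f s' ∂(κ s)) :
    ∀ s, f s = ∫ ω, (∑' t : ℕ, δ ^ t * (1 - δ) * u (ω t)) ∂(P s) := by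
  obtain ⟨C, hu⟩ := hu_bd
  obtain ⟨Cf, hf⟩ := hf_bd
  let K : Kernel S (ℕ → S) := ⟨P, hP_meas⟩
  have : IsMarkovKernel K := ⟨hP_prob⟩
  have hK : ∀ s, K s = (κ s).bind (K.map (prepend s)) := fun s => by
    rw [funext (K.map_apply (measurable_prepend s))]
    exact hP_rec s
  have hfg : f = valueFunction δ u K :=
    bellman_solution_unique hδ0.le hδ1 hf_meas hf hf_bellman
      (measurable_valueFunction hδ0.le hδ1 hu_meas hu) (abs_valueFunction_le hδ0.le hδ1 hu)
      (valueFunction_bellman hK hδ0.le hδ1 hu_meas hu)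
  exact congrFun hfg
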